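/- arXiv:2003.05402 — 2 statements merged into one kernel-verified Lean document; each statement's English description precedes it below -/
import Mathlib

section
/- Let $e^M(\cdot)$ and $\tilde{e}^M(\cdot)$ be two collections of orthonormal function bases, where for each $j = 1,\dots,p$, $e_j^M$ and $\tilde{e}_j^M$ are orthonormal bases of the same $M$-dimensional subspace $\mathbb{V}_j^M$ of a separable Hilbert space. Let $\Theta^{X,M}$ and $\tilde\Theta^{X,M}$ (resp. $\Theta^{Y,M}$, $\tilde\Theta^{Y,M}$) be the precision matrices of the projection score vectors of a $p$-dimensional Gaussian process $X$ (resp. $Y$) with respect to the two bases, and let $\Delta^M = \Theta^{X,M} - \Theta^{Y,M}$, $\tilde\Delta^M = \tilde\Theta^{X,M} - \tilde\Theta^{Y,M}$, with $(j,l)$-th $M \times M$ blocks $\Delta^M_{jl}$ and $\tilde\Delta^M_{jl}$. Then $\|\Delta^M_{jl}\|_F = \|\tilde\Delta^M_{jl}\|_F$ for every pair $(j,l)$; in particular, the differential edge set $E_\Delta^\pi = \{(j,l) : j < l, \|\Delta^M_{jl}\|_F > 0\}$ is independent of the choice of orthonormal basis of $\mathbb{V}_{[p]}^M$. -/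
/-!
Writing `ẽ j k = ∑ₙ Gⱼ k n • e j n`, each `Gⱼ` is orthogonal, so the score vectors satisfy
`ã = U a` with `U = diag(G₁, …, Gₚ)`. Hence `Σ̃ = U Σ Uᵀ` for both processes and, because
`(A B)⁻¹ = B⁻¹ A⁻¹` holds for the matrix inverse even at singular matrices (where it is `0`),
`Θ̃ = U Θ Uᵀ` and `Δ̃ = U Δ Uᵀ`. The `(j,l)` block of `U Δ Uᵀ` is `Gⱼ Δⱼₗ Gₗᵀ`, which has the
same Frobenius norm as `Δⱼₗ`.
-/

open MeasureTheory Matrix Submodule Set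

section TransitionMatrix

variable {H : Type*} [NormedAddCommGroup H] [InnerProductSpace ℝ H] {κ : Type*} [Fintype κ]

theorem Orthonormal.eq_sum_inner_smul_of_mem_span {e : κ → H} (he : Orthonormal ℝ e) {x : H}
    (hx : x ∈ span ℝ (range e)) : x = ∑ n, inner ℝ x (e n) • e n := by
  obtain ⟨c, rfl⟩ := (mem_span_range_iff_exists_fun ℝ).mp hx
  simp_rw [real_inner_comm, he.inner_right_fintype]

def transitionMatrix (e f : κ → H) : Matrix κ κ ℝ :=
  of fun k n => inner ℝ (f k) (e n)

variable {e f : κ → H}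

theorem inner_eq_sum_transitionMatrix_mul (he : Orthonormal ℝ e)
    (hf : ∀ k, f k ∈ span ℝ (range e)) (x : H) (k : κ) :
    inner ℝ x (f k) = ∑ n, transitionMatrix e f k n * inner ℝ x (e n) := by
  conv_lhs => rw [he.eq_sum_inner_smul_of_mem_span (hf k)]
  simp [transitionMatrix, inner_sum, real_inner_smul_right]

theorem transitionMatrix_mul_transpose [DecidableEq κ] (he : Orthonormal ℝ e)
    (hf : Orthonormal ℝ f) (hfe : ∀ k, f k ∈ span ℝ (range e)) :
    transitionMatrix e f * (transitionMatrix e f)ᵀ = 1 := by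
  ext k m
  rw [mul_apply, one_apply, ← orthonormal_iff_ite.mp hf,
    inner_eq_sum_transitionMatrix_mul he hfe]
  simp only [transitionMatrix, transpose_apply, of_apply, mul_comm]

end TransitionMatrix

namespace Matrix

section BlockDiagonal

variable {ι κ α : Type*} [Fintype ι] [DecidableEq ι] [Fintype κ]

theorem comp_diagonal_mulVec_apply [NonUnitalNonAssocSemiring α] (G : ι → Matrix κ κ α)
    (v : ι × κ → α) (j : ι) (k : κ) :
    (comp ι ι κ κ α (diagonal G) *ᵥ v) (j, k) = (G j *ᵥ fun n => v (j, n)) k := by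
  simp only [mulVec, dotProduct, Fintype.sum_prod_type, comp_apply]
  rw [Fintype.sum_eq_single j fun l hl => by simp [diagonal_apply_ne _ (Ne.symm hl)]]
  simp [diagonal_apply_eq]

theorem comp_diagonal_mul_mul_transpose_apply [CommSemiring α] (G G' : ι → Matrix κ κ α)
    (A : Matrix (ι × κ) (ι × κ) α) (j l : ι) (k m : κ) :
    (comp ι ι κ κ α (diagonal G) * A * (comp ι ι κ κ α (diagonal G'))ᵀ) (j, k) (l, m) =
      (G j * (comp ι ι κ κ α).symm A j l * (G' l)ᵀ) k m := by
  obtain ⟨B, rfl⟩ := (comp ι ι κ κ α).surjective A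
  rw [transpose_comp, diagonal_transpose, ← compRingEquiv_apply, ← compRingEquiv_apply,
    ← compRingEquiv_apply, ← map_mul, ← map_mul, diagonal_map transpose_zero]
  simp [diagonal_mul, mul_diagonal]

theorem comp_diagonal_mul_transpose_eq_one [CommSemiring α] [DecidableEq κ]
    {G : ι → Matrix κ κ α} (hG : ∀ j, G j * (G j)ᵀ = 1) :
    comp ι ι κ κ α (diagonal G) * (comp ι ι κ κ α (diagonal G))ᵀ = 1 := by
  rw [transpose_comp, diagonal_transpose, ← compRingEquiv_apply, ← compRingEquiv_apply,
    ← map_mul, diagonal_map transpose_zero, diagonal_mul_diagonal]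
  simp only [hG]
  exact comp_one

end BlockDiagonal

section Orthogonal

variable {m n α : Type*} [Fintype m] [Fintype n]

theorem inv_mul_mul_transpose [DecidableEq n] [CommRing α] {U : Matrix n n α} (hU : U * Uᵀ = 1)
    (A : Matrix n n α) : (U * A * Uᵀ)⁻¹ = U * A⁻¹ * Uᵀ := by
  rw [Matrix.mul_inv_rev, Matrix.mul_inv_rev, inv_eq_left_inv hU, inv_eq_right_inv hU, mul_assoc]

theorem trace_mul_transpose_self [CommSemiring α] (C : Matrix m n α) :
    (C * Cᵀ).trace = ∑ k, ∑ l, C k l ^ 2 := by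
  simp [trace, mul_apply, sq]

theorem sum_sq_mul_mul_transpose {m' n' : Type*} [Fintype m'] [Fintype n'] [DecidableEq m]
    [DecidableEq n] [CommSemiring α] {U : Matrix m' m α} {V : Matrix n' n α} (hU : Uᵀ * U = 1)
    (hV : Vᵀ * V = 1) (B : Matrix m n α) :
    ∑ k, ∑ l, (U * B * Vᵀ) k l ^ 2 = ∑ k, ∑ l, B k l ^ 2 := by
  rw [← trace_mul_transpose_self, ← trace_mul_transpose_self]
  calc ((U * B * Vᵀ) * (U * B * Vᵀ)ᵀ).trace = (U * B * (Vᵀ * V) * Bᵀ * Uᵀ).trace := by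
        simp only [transpose_mul, transpose_transpose, Matrix.mul_assoc]
    _ = ((Uᵀ * U) * (B * Bᵀ)).trace := by
        rw [hV, Matrix.mul_one, trace_mul_comm, Matrix.mul_assoc, Matrix.mul_assoc]
    _ = (B * Bᵀ).trace := by rw [hU, Matrix.one_mul]

end Orthogonal

end Matrix

section SecondMoment

variable {Ω ι κ : Type*} [MeasurableSpace Ω] [Fintype ι]

noncomputable def secondMoment (μ : Measure Ω) (a : Ω → ι → ℝ) : Matrix ι ι ℝ :=
  of fun x y => ∫ ω, a ω x * a ω y ∂μ

theorem secondMoment_mulVec (μ : Measure Ω) {a : Ω → ι → ℝ}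
    (ha : ∀ x y, Integrable (fun ω => a ω x * a ω y) μ) (U : Matrix κ ι ℝ) :
    secondMoment μ (fun ω => U *ᵥ a ω) = U * secondMoment μ a * Uᵀ := by
  ext i i'
  have hexpand : ∀ ω, (U *ᵥ a ω) i * (U *ᵥ a ω) i' =
      ∑ x, ∑ y, U i x * U i' y * (a ω x * a ω y) := fun ω => by
    simp only [mulVec, dotProduct, Finset.sum_mul_sum]
    exact Finset.sum_congr rfl fun _ _ => Finset.sum_congr rfl fun _ _ => by ring
  simp only [secondMoment, of_apply, hexpand]
  rw [integral_finsetSum _ fun x _ => integrable_finsetSum _ fun y _ => (ha x y).const_mul _]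
  simp_rw [integral_finsetSum _ fun y _ => (ha _ y).const_mul _, integral_const_mul,
    mul_apply, transpose_apply, of_apply, Finset.sum_mul]
  rw [Finset.sum_comm]
  exact Finset.sum_congr rfl fun _ _ => Finset.sum_congr rfl fun _ _ => by ring

end SecondMoment

section ProjectionScores

variable {H Ω ι κ : Type*} [NormedAddCommGroup H] [InnerProductSpace ℝ H] [Fintype ι]
  [DecidableEq ι] [Fintype κ]

def projScores (X : ι → Ω → H) (e : ι → κ → H) (ω : Ω) : ι × κ → ℝ :=
  fun q => inner ℝ (X q.1 ω) (e q.1 q.2)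

variable {e f : ι → κ → H}

theorem projScores_eq_mulVec (he : ∀ j, Orthonormal ℝ (e j))
    (hfe : ∀ j k, f j k ∈ span ℝ (range (e j))) (X : ι → Ω → H) (ω : Ω) :
    projScores X f ω =
      comp ι ι κ κ ℝ (diagonal fun j => transitionMatrix (e j) (f j)) *ᵥ projScores X e ω := by
  ext ⟨j, k⟩
  rw [comp_diagonal_mulVec_apply]
  exact inner_eq_sum_transitionMatrix_mul (he j) (hfe j) _ k

theorem secondMoment_projScores [MeasurableSpace Ω] (μ : Measure Ω)
    (he : ∀ j, Orthonormal ℝ (e j)) (hfe : ∀ j k, f j k ∈ span ℝ (range (e j)))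
    {X : ι → Ω → H} (hX : ∀ j k l m, Integrable
      (fun ω => inner ℝ (X j ω) (e j k) * inner ℝ (X l ω) (e l m)) μ) :
    secondMoment μ (projScores X f) =
      comp ι ι κ κ ℝ (diagonal fun j => transitionMatrix (e j) (f j)) *
        secondMoment μ (projScores X e) *
        (comp ι ι κ κ ℝ (diagonal fun j => transitionMatrix (e j) (f j)))ᵀ := by
  rw [funext (projScores_eq_mulVec he hfe X)]
  exact secondMoment_mulVec μ (fun x y => hX x.1 x.2 y.1 y.2) _

end ProjectionScores

theorem differential_graph_basis_invariance_general
    (H : Type*) [NormedAddCommGroup H] [InnerProductSpace ℝ H]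
    {Ω : Type*} [MeasurableSpace Ω] (μ : Measure Ω)
    (p M : ℕ)
    (e et : Fin p → Fin M → H)
    (he : ∀ j, Orthonormal ℝ (e j)) (het : ∀ j, Orthonormal ℝ (et j))
    (hspan : ∀ j, Submodule.span ℝ (Set.range (e j)) =
      Submodule.span ℝ (Set.range (et j)))
    (X Y : Fin p → Ω → H)
    (hXint : ∀ j k l m, Integrable
      (fun ω => (inner ℝ (X j ω) (e j k) : ℝ) * (inner ℝ (X l ω) (e l m) : ℝ)) μ)
    (hYint : ∀ j k l m, Integrable
      (fun ω => (inner ℝ (Y j ω) (e j k) : ℝ) * (inner ℝ (Y l ω) (e l m) : ℝ)) μ)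
    (SigX SigY SigXt SigYt : Matrix (Fin p × Fin M) (Fin p × Fin M) ℝ)
    (hSigX : ∀ j k l m, SigX (j, k) (l, m) =
      ∫ ω, (inner ℝ (X j ω) (e j k) : ℝ) * (inner ℝ (X l ω) (e l m) : ℝ) ∂μ)
    (hSigY : ∀ j k l m, SigY (j, k) (l, m) =
      ∫ ω, (inner ℝ (Y j ω) (e j k) : ℝ) * (inner ℝ (Y l ω) (e l m) : ℝ) ∂μ)
    (hSigXt : ∀ j k l m, SigXt (j, k) (l, m) =
      ∫ ω, (inner ℝ (X j ω) (et j k) : ℝ) * (inner ℝ (X l ω) (et l m) : ℝ) ∂μ)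
    (hSigYt : ∀ j k l m, SigYt (j, k) (l, m) =
      ∫ ω, (inner ℝ (Y j ω) (et j k) : ℝ) * (inner ℝ (Y l ω) (et l m) : ℝ) ∂μ)
    (Δ Δt : Matrix (Fin p × Fin M) (Fin p × Fin M) ℝ)
    (hΔ : Δ = SigX⁻¹ - SigY⁻¹) (hΔt : Δt = SigXt⁻¹ - SigYt⁻¹) :
    (∀ j l : Fin p,
      Real.sqrt (∑ k, ∑ m, (Δ (j, k) (l, m)) ^ 2) =
        Real.sqrt (∑ k, ∑ m, (Δt (j, k) (l, m)) ^ 2)) ∧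
    {q : Fin p × Fin p | q.1 < q.2 ∧
        0 < Real.sqrt (∑ k, ∑ m, (Δ (q.1, k) (q.2, m)) ^ 2)} =
      {q : Fin p × Fin p | q.1 < q.2 ∧
        0 < Real.sqrt (∑ k, ∑ m, (Δt (q.1, k) (q.2, m)) ^ 2)} := by
  have hfe : ∀ j k, et j k ∈ span ℝ (range (e j)) :=
    fun j k => hspan j ▸ subset_span (mem_range_self k)
  have hG : ∀ j, transitionMatrix (e j) (et j) * (transitionMatrix (e j) (et j))ᵀ = 1 :=
    fun j => transitionMatrix_mul_transpose (he j) (het j) (hfe j)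
  set U := comp (Fin p) (Fin p) (Fin M) (Fin M) ℝ
    (diagonal fun j => transitionMatrix (e j) (et j)) with hUdef
  have hU : U * Uᵀ = 1 := comp_diagonal_mul_transpose_eq_one hG
  have hmoment : ∀ (Z : Fin p → Ω → H) (b : Fin p → Fin M → H) (S : Matrix _ _ ℝ),
      (∀ j k l m, S (j, k) (l, m) =
        ∫ ω, (inner ℝ (Z j ω) (b j k) : ℝ) * (inner ℝ (Z l ω) (b l m) : ℝ) ∂μ) →
      S = secondMoment μ (projScores Z b) :=
    fun Z b S hS => by ext ⟨j, k⟩ ⟨l, m⟩; exact hS j k l m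
  have hΔt' : Δt = U * Δ * Uᵀ := by
    rw [hΔt, hΔ, hmoment X et SigXt hSigXt, hmoment Y et SigYt hSigYt,
      secondMoment_projScores μ he hfe hXint, secondMoment_projScores μ he hfe hYint,
      ← hmoment X e SigX hSigX, ← hmoment Y e SigY hSigY,
      inv_mul_mul_transpose hU, inv_mul_mul_transpose hU, Matrix.mul_sub, Matrix.sub_mul]
  have hblock : ∀ j l, ∑ k, ∑ m, (Δt (j, k) (l, m)) ^ 2 = ∑ k, ∑ m, (Δ (j, k) (l, m)) ^ 2 :=
    fun j l => by
      simp_rw [hΔt', hUdef, comp_diagonal_mul_mul_transpose_apply]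
      exact sum_sq_mul_mul_transpose (mul_eq_one_comm.mp (hG j)) (mul_eq_one_comm.mp (hG l)) _
  exact ⟨fun j l => by rw [hblock], by simp only [hblock]⟩

/-- Invariance of the differential graph under change of orthonormal basis.
For each node `j`, `e j` and `et j` are orthonormal bases of the same
`M`-dimensional subspace `𝕍ⱼᴹ` of a separable Hilbert space.  `Σ^{X,M}` (resp.
the tilde version) is the covariance of the stacked projection-score vector of
the mean-zero Gaussian process `X` with respect to the basis `e` (resp. `et`),
`Θ^{X,M}` its (pseudo-)inverse, similarly for `Y`, and `Δ^M = Θ^{X,M} - Θ^{Y,M}`.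
Then the Frobenius norms of the `(j,l)` blocks of `Δ^M` and `Δ̃^M` coincide, and
hence the differential edge set `{(j,l) : j < l, ‖Δ^M_{jl}‖_F > 0}` does not
depend on the choice of basis. -/
theorem differential_graph_basis_invariance
    (H : Type*) [NormedAddCommGroup H] [InnerProductSpace ℝ H]
    {Ω : Type*} [MeasurableSpace Ω] (μ : Measure Ω) [IsProbabilityMeasure μ]
    (p M : ℕ)
    (e et : Fin p → Fin M → H)
    (he : ∀ j, Orthonormal ℝ (e j)) (het : ∀ j, Orthonormal ℝ (et j))
    (hspan : ∀ j, Submodule.span ℝ (Set.range (e j)) =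
      Submodule.span ℝ (Set.range (et j)))
    (X Y : Fin p → Ω → H)
    (hXint : ∀ j k l m, Integrable
      (fun ω => (inner ℝ (X j ω) (e j k) : ℝ) * (inner ℝ (X l ω) (e l m) : ℝ)) μ)
    (hYint : ∀ j k l m, Integrable
      (fun ω => (inner ℝ (Y j ω) (e j k) : ℝ) * (inner ℝ (Y l ω) (e l m) : ℝ)) μ)
    (SigX SigY SigXt SigYt : Matrix (Fin p × Fin M) (Fin p × Fin M) ℝ)
    (hSigX : ∀ j k l m, SigX (j, k) (l, m) =
      ∫ ω, (inner ℝ (X j ω) (e j k) : ℝ) * (inner ℝ (X l ω) (e l m) : ℝ) ∂μ)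
    (hSigY : ∀ j k l m, SigY (j, k) (l, m) =
      ∫ ω, (inner ℝ (Y j ω) (e j k) : ℝ) * (inner ℝ (Y l ω) (e l m) : ℝ) ∂μ)
    (hSigXt : ∀ j k l m, SigXt (j, k) (l, m) =
      ∫ ω, (inner ℝ (X j ω) (et j k) : ℝ) * (inner ℝ (X l ω) (et l m) : ℝ) ∂μ)
    (hSigYt : ∀ j k l m, SigYt (j, k) (l, m) =
      ∫ ω, (inner ℝ (Y j ω) (et j k) : ℝ) * (inner ℝ (Y l ω) (et l m) : ℝ) ∂μ)
    (Δ Δt : Matrix (Fin p × Fin M) (Fin p × Fin M) ℝ)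
    (hΔ : Δ = SigX⁻¹ - SigY⁻¹) (hΔt : Δt = SigXt⁻¹ - SigYt⁻¹) :
    (∀ j l : Fin p,
      Real.sqrt (∑ k, ∑ m, (Δ (j, k) (l, m)) ^ 2) =
        Real.sqrt (∑ k, ∑ m, (Δt (j, k) (l, m)) ^ 2)) ∧
    {q : Fin p × Fin p | q.1 < q.2 ∧
        0 < Real.sqrt (∑ k, ∑ m, (Δ (q.1, k) (q.2, m)) ^ 2)} =
      {q : Fin p × Fin p | q.1 < q.2 ∧
        0 < Real.sqrt (∑ k, ∑ m, (Δt (q.1, k) (q.2, m)) ^ 2)} :=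
  differential_graph_basis_invariance_general H μ p M e et he het hspan X Y hXint hYint SigX SigY
    SigXt SigYt hSigX hSigY hSigXt hSigYt Δ Δt hΔ hΔt
end

section
/- Let $A^{(1)}, \dots, A^{(Q)} \in \mathbb{R}^{M \times M}$, $\rho > 0$, $\lambda_1, \lambda_2 \ge 0$, and consider minimizing over $Z^{(1)}, \dots, Z^{(Q)} \in \mathbb{R}^{M \times M}$ the function $\frac{\rho}{2} \sum_{q=1}^Q \|Z^{(q)} - A^{(q)}\|_F^2 + \lambda_1 \sum_{q=1}^Q \|Z^{(q)}\|_F + \lambda_2 \left( \sum_{q=1}^Q \|Z^{(q)}\|_F^2 \right)^{1/2}$. Then: (a) all $\hat Z^{(q)} = 0$ if and only if $\sqrt{\sum_{q=1}^Q (\|A^{(q)}\|_F - \lambda_1/\rho)_+^2} \le \lambda_2/\rho$; (b) otherwise, the minimizer is $\hat Z^{(q)} = \left( \frac{\|A^{(q)}\|_F - \lambda_1/\rho}{\|A^{(q)}\|_F} \right)_+ \left( 1 - \frac{\lambda_2}{\rho \sqrt{\sum_{q'=1}^Q (\|A^{(q')}\|_F - \lambda_1/\rho)_+^2}} \right)_+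 A^{(q)}$ for each $q$. -/
/-!
The minimizer is a composition of two soft-thresholdings: blockwise,
`W q = (1 - (λ₁/ρ)/‖A q‖)₊ A q`, then jointly, `Ẑ = (1 - (λ₂/ρ)/‖W‖)₊ W` with `‖W‖² = ∑ q, ‖W q‖²`.
Soft-thresholding `x ↦ y` at level `t` leaves a residual `x - y = t u` with `‖u‖ ≤ 1` and
`⟪u, y⟫ = ‖y‖`, i.e. `u` is a subgradient of the norm at `y`. Since `Ẑ q` is a nonnegative
multiple of `W q`, the two residuals certify `ρ (A - Ẑ) ∈ ∂(λ₁ ∑ q, ‖Z q‖ + λ₂ ‖Z‖)(Ẑ)`, and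
`ρ`-strong convexity of the quadratic term gives `G Ẑ + ρ/2 ‖Z - Ẑ‖² ≤ G Z`. Hence `Ẑ` is the unique
minimizer, and it vanishes exactly when `‖W‖ ≤ λ₂/ρ`. Matrices enter through the Frobenius
isometry onto Euclidean space.
-/

/-- The Frobenius norm of a real matrix. -/
noncomputable def frobNorm {M : ℕ} (A : Matrix (Fin M) (Fin M) ℝ) : ℝ :=
  Real.sqrt (∑ i, ∑ j, (A i j) ^ 2)

open RealInnerProductSpace

namespace SparseGroupLasso

section SoftThreshold

variable {F : Type*} [NormedAddCommGroup F] [InnerProductSpace ℝ F]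

noncomputable def softThreshold (t : ℝ) (x : F) : F := max (1 - t / ‖x‖) 0 • x

lemma softThreshold_eq_max_sub_div_smul (t : ℝ) (x : F) :
    softThreshold t x = max ((‖x‖ - t) / ‖x‖) 0 • x := by
  rcases eq_or_ne x 0 with rfl | hx
  · simp [softThreshold]
  · rw [softThreshold, sub_div, div_self (norm_ne_zero_iff.2 hx)]

lemma norm_softThreshold {t : ℝ} (ht : 0 ≤ t) (x : F) :
    ‖softThreshold t x‖ = max (‖x‖ - t) 0 := by
  rcases (norm_nonneg x).eq_or_lt with hx | hx
  · simp [softThreshold, ← hx, ht]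
  · rw [softThreshold, norm_smul, Real.norm_of_nonneg (le_max_right _ _),
      max_mul_of_nonneg _ _ hx.le, sub_mul, div_mul_cancel₀ _ hx.ne', one_mul, zero_mul]

lemma softThreshold_eq_zero_iff {t : ℝ} (ht : 0 ≤ t) (x : F) :
    softThreshold t x = 0 ↔ ‖x‖ ≤ t := by
  rw [← norm_eq_zero, norm_softThreshold ht, max_eq_right_iff, sub_nonpos]

lemma inner_sub_le_norm_sub_norm {u x : F} (hu : ‖u‖ ≤ 1) (hux : ⟪u, x⟫ = ‖x‖) (z : F) :
    ⟪u, z - x⟫ ≤ ‖z‖ - ‖x‖ := by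
  rw [inner_sub_right, hux, sub_le_sub_iff_right]
  exact (real_inner_le_norm u z).trans (mul_le_of_le_one_left (norm_nonneg z) hu)

lemma inner_smul_right_eq_norm_smul {u x : F} (hux : ⟪u, x⟫ = ‖x‖) {c : ℝ} (hc : 0 ≤ c) :
    ⟪u, c • x⟫ = ‖c • x‖ := by
  rw [real_inner_smul_right, hux, norm_smul, Real.norm_of_nonneg hc]

lemma exists_eq_softThreshold_add_smul {t : ℝ} (ht : 0 ≤ t) (x : F) :
    ∃ u : F, ‖u‖ ≤ 1 ∧ ⟪u, softThreshold t x⟫ = ‖softThreshold t x‖ ∧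
      x = softThreshold t x + t • u := by
  rcases le_or_gt ‖x‖ t with hxt | htx
  · rw [(softThreshold_eq_zero_iff ht x).2 hxt]
    refine ⟨t⁻¹ • x, ?_, by simp, ?_⟩
    · rw [norm_smul, norm_inv, Real.norm_of_nonneg ht]
      exact inv_mul_le_one_of_le₀ hxt ht
    · rcases ht.eq_or_lt with rfl | htpos
      · simpa using hxt
      · rw [zero_add, smul_smul, mul_inv_cancel₀ htpos.ne', one_smul]
  · have hx : 0 < ‖x‖ := ht.trans_lt htx
    have hst : softThreshold t x = (1 - t / ‖x‖) • x := by
      rw [softThreshold, max_eq_left]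
      exact sub_nonneg.2 ((div_le_one hx).2 htx.le)
    refine ⟨‖x‖⁻¹ • x, ?_, ?_, ?_⟩
    · rw [norm_smul, norm_inv, norm_norm, inv_mul_cancel₀ hx.ne']
    · rw [hst]
      refine inner_smul_right_eq_norm_smul ?_ (sub_nonneg.2 ((div_le_one hx).2 htx.le))
      rw [real_inner_smul_left, real_inner_self_eq_norm_sq, sq, ← mul_assoc,
        inv_mul_cancel₀ hx.ne', one_mul]
    · rw [hst, smul_smul, ← add_smul, div_eq_mul_inv, sub_add_cancel, one_smul]

lemma prox_objective_add_le {f : F → ℝ} {ρ : ℝ} {a x : F}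
    (hf : ∀ z, f x + ⟪ρ • (a - x), z - x⟫ ≤ f z) (z : F) :
    ρ / 2 * ‖x - a‖ ^ 2 + f x + ρ / 2 * ‖z - x‖ ^ 2 ≤ ρ / 2 * ‖z - a‖ ^ 2 + f z := by
  have hsplit : ‖z - a‖ ^ 2 = ‖z - x‖ ^ 2 + 2 * ⟪z - x, x - a⟫ + ‖x - a‖ ^ 2 := by
    rw [← norm_add_sq_real, sub_add_sub_cancel]
  have hfz := hf z
  rw [real_inner_smul_left, ← neg_sub x a, inner_neg_left, real_inner_comm] at hfz
  linear_combination hfz - ρ / 2 * hsplit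

end SoftThreshold

section Group

variable {ι E : Type*} [NormedAddCommGroup E] [InnerProductSpace ℝ E]

noncomputable def blockSoftThreshold (t : ℝ) (a : PiLp 2 fun _ : ι => E) :
    PiLp 2 fun _ : ι => E :=
  WithLp.toLp 2 fun q => softThreshold t (a q)

lemma exists_eq_blockSoftThreshold_add_smul {t : ℝ} (ht : 0 ≤ t) (a : PiLp 2 fun _ : ι => E) :
    ∃ u : PiLp 2 (fun _ : ι => E), (∀ q, ‖u q‖ ≤ 1 ∧
      ⟪u q, blockSoftThreshold t a q⟫ = ‖blockSoftThreshold t a q‖) ∧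
      a = blockSoftThreshold t a + t • u := by
  choose u hu using fun q => exists_eq_softThreshold_add_smul ht (a q)
  refine ⟨WithLp.toLp 2 u, fun q => ⟨(hu q).1, (hu q).2.1⟩, ?_⟩
  ext q
  exact (hu q).2.2

variable [Fintype ι]

lemma norm_blockSoftThreshold {t : ℝ} (ht : 0 ≤ t) (a : PiLp 2 fun _ : ι => E) :
    ‖blockSoftThreshold t a‖ = √(∑ q, max (‖a q‖ - t) 0 ^ 2) := by
  simp [PiLp.norm_eq_of_L2, blockSoftThreshold, norm_softThreshold ht]

lemma inner_sub_le_sum_norm_sub_sum_norm {u x : PiLp 2 fun _ : ι => E}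
    (hux : ∀ q, ‖u q‖ ≤ 1 ∧ ⟪u q, x q⟫ = ‖x q‖) (z : PiLp 2 fun _ : ι => E) :
    ⟪u, z - x⟫ ≤ ∑ q, ‖z q‖ - ∑ q, ‖x q‖ := by
  rw [PiLp.inner_apply, ← Finset.sum_sub_distrib]
  exact Finset.sum_le_sum fun q _ => inner_sub_le_norm_sub_norm (hux q).1 (hux q).2 (z q)

noncomputable def groupProx (t₁ t₂ : ℝ) (a : PiLp 2 fun _ : ι => E) : PiLp 2 fun _ : ι => E :=
  softThreshold t₂ (blockSoftThreshold t₁ a)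

noncomputable def groupObjective (ρ lam₁ lam₂ : ℝ) (a z : PiLp 2 fun _ : ι => E) : ℝ :=
  ρ / 2 * ‖z - a‖ ^ 2 + lam₁ * ∑ q, ‖z q‖ + lam₂ * ‖z‖

lemma groupProx_apply (t₁ t₂ : ℝ) (a : PiLp 2 fun _ : ι => E) (q : ι) :
    groupProx t₁ t₂ a q = (max ((‖a q‖ - t₁) / ‖a q‖) 0 *
      max (1 - t₂ / ‖blockSoftThreshold t₁ a‖) 0) • a q := by
  rw [mul_comm, ← smul_smul, ← softThreshold_eq_max_sub_div_smul]
  rfl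

lemma groupProx_eq_zero_iff {t₁ t₂ : ℝ} (ht₁ : 0 ≤ t₁) (ht₂ : 0 ≤ t₂)
    (a : PiLp 2 fun _ : ι => E) :
    groupProx t₁ t₂ a = 0 ↔ √(∑ q, max (‖a q‖ - t₁) 0 ^ 2) ≤ t₂ := by
  rw [groupProx, softThreshold_eq_zero_iff ht₂, norm_blockSoftThreshold ht₁]

lemma exists_eq_groupProx_add_smul_add_smul {t₁ t₂ : ℝ} (ht₁ : 0 ≤ t₁) (ht₂ : 0 ≤ t₂)
    (a : PiLp 2 fun _ : ι => E) :
    ∃ u v : PiLp 2 (fun _ : ι => E),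
      (∀ q, ‖u q‖ ≤ 1 ∧ ⟪u q, groupProx t₁ t₂ a q⟫ = ‖groupProx t₁ t₂ a q‖) ∧
      ‖v‖ ≤ 1 ∧ ⟪v, groupProx t₁ t₂ a⟫ = ‖groupProx t₁ t₂ a‖ ∧
      a = groupProx t₁ t₂ a + t₁ • u + t₂ • v := by
  obtain ⟨u, hu, hau⟩ := exists_eq_blockSoftThreshold_add_smul ht₁ a
  obtain ⟨v, hv, hvx, hwv⟩ := exists_eq_softThreshold_add_smul ht₂ (blockSoftThreshold t₁ a)
  -- `groupProx t₁ t₂ a` is a nonnegative multiple of `blockSoftThreshold t₁ a`.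
  refine ⟨u, v, fun q => ⟨(hu q).1, inner_smul_right_eq_norm_smul (hu q).2 (le_max_right _ _)⟩,
    hv, hvx, ?_⟩
  rw [groupProx, add_right_comm, ← hwv]
  exact hau

theorem groupObjective_groupProx_add_le {ρ lam₁ lam₂ : ℝ} (hρ : 0 < ρ) (hlam₁ : 0 ≤ lam₁)
    (hlam₂ : 0 ≤ lam₂) (a z : PiLp 2 fun _ : ι => E) :
    groupObjective ρ lam₁ lam₂ a (groupProx (lam₁ / ρ) (lam₂ / ρ) a) +
        ρ / 2 * ‖z - groupProx (lam₁ / ρ) (lam₂ / ρ) a‖ ^ 2 ≤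
      groupObjective ρ lam₁ lam₂ a z := by
  obtain ⟨u, v, hu, hv, hvx, ha⟩ :=
    exists_eq_groupProx_add_smul_add_smul (div_nonneg hlam₁ hρ.le) (div_nonneg hlam₂ hρ.le) a
  set x := groupProx (lam₁ / ρ) (lam₂ / ρ) a
  have hresidual : ρ • (a - x) = lam₁ • u + lam₂ • v := by
    rw [sub_eq_of_eq_add' (ha.trans (add_assoc _ _ _)), smul_add, smul_smul, smul_smul,
      mul_div_cancel₀ _ hρ.ne', mul_div_cancel₀ _ hρ.ne']
  have hopt := prox_objective_add_le (f := fun z => lam₁ * ∑ q, ‖z q‖ + lam₂ * ‖z‖) (a := a) (x := x)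
    (fun z => by
      have h₁ := mul_le_mul_of_nonneg_left (inner_sub_le_sum_norm_sub_sum_norm hu z) hlam₁
      have h₂ := mul_le_mul_of_nonneg_left (inner_sub_le_norm_sub_norm hv hvx z) hlam₂
      rw [hresidual, inner_add_left, real_inner_smul_left, real_inner_smul_left]
      linarith) z
  simp only [groupObjective]
  linarith

end Group

section Matrix

variable {m n ι : Type*}

def frobVec : Matrix m n ℝ →ₗ[ℝ] EuclideanSpace ℝ (m × n) where
  toFun A := WithLp.toLp 2 fun p => A p.1 p.2
  map_add' _ _ := rfl
  map_smul' _ _ := rfl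

@[simp]
lemma frobVec_apply (A : Matrix m n ℝ) (p : m × n) : frobVec A p = A p.1 p.2 := rfl

lemma frobVec_injective : Function.Injective (frobVec : Matrix m n ℝ →ₗ[ℝ] _) :=
  fun A B h => by
    ext i j
    simpa using congrArg (· (i, j)) h

lemma frobNorm_eq_norm_frobVec {M : ℕ} (A : Matrix (Fin M) (Fin M) ℝ) :
    frobNorm A = ‖frobVec A‖ := by
  simp [frobNorm, EuclideanSpace.norm_eq, Fintype.sum_prod_type]

def stackFrobVec : (ι → Matrix m n ℝ) →ₗ[ℝ] PiLp 2 fun _ : ι => EuclideanSpace ℝ (m × n) :=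
  (WithLp.linearEquiv 2 ℝ _).symm.toLinearMap ∘ₗ frobVec.compLeft ι

@[simp]
lemma stackFrobVec_apply (Z : ι → Matrix m n ℝ) (q : ι) : stackFrobVec Z q = frobVec (Z q) :=
  rfl

lemma norm_stackFrobVec_apply {M : ℕ} (Z : ι → Matrix (Fin M) (Fin M) ℝ) (q : ι) :
    ‖stackFrobVec Z q‖ = frobNorm (Z q) :=
  (frobNorm_eq_norm_frobVec (Z q)).symm

lemma stackFrobVec_injective : Function.Injective (stackFrobVec : (ι → Matrix m n ℝ) →ₗ[ℝ] _) :=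
  fun _ _ h => funext fun q => frobVec_injective (by simpa using congrArg (· q) h)

lemma groupObjective_stackFrobVec [Fintype ι] {M : ℕ} (ρ lam₁ lam₂ : ℝ)
    (A Z : ι → Matrix (Fin M) (Fin M) ℝ) :
    groupObjective ρ lam₁ lam₂ (stackFrobVec A) (stackFrobVec Z) =
      ρ / 2 * ∑ q, frobNorm (Z q - A q) ^ 2 + lam₁ * ∑ q, frobNorm (Z q) +
        lam₂ * √(∑ q, frobNorm (Z q) ^ 2) := by
  rw [groupObjective, ← map_sub, PiLp.norm_sq_eq_of_L2, PiLp.norm_eq_of_L2]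
  simp only [norm_stackFrobVec_apply, Pi.sub_apply]

end Matrix

end SparseGroupLasso

open SparseGroupLasso

/-- Closed-form solution of the grouped proximal problem
`min_Z  (ρ/2)∑_q ‖Z^q - A^q‖_F² + λ₁∑_q ‖Z^q‖_F + λ₂ (∑_q ‖Z^q‖_F²)^{1/2}`:
(a) the all-zero tuple is the minimizer iff
`√(∑_q (‖A^q‖_F - λ₁/ρ)₊²) ≤ λ₂/ρ`; (b) otherwise the minimizer is
`Ẑ^q = ((‖A^q‖_F - λ₁/ρ)/‖A^q‖_F)₊ (1 - λ₂/(ρ√(∑ (‖A^{q'}‖_F - λ₁/ρ)₊²)))₊ A^q`. -/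
theorem grouped_frob_prox (Q M : ℕ) (A : Fin Q → Matrix (Fin M) (Fin M) ℝ)
    (ρ lam1 lam2 : ℝ) (hρ : 0 < ρ) (hlam1 : 0 ≤ lam1) (hlam2 : 0 ≤ lam2)
    (G : (Fin Q → Matrix (Fin M) (Fin M) ℝ) → ℝ)
    (hG : ∀ Z, G Z = ρ / 2 * ∑ q, (frobNorm (Z q - A q)) ^ 2 +
      lam1 * ∑ q, frobNorm (Z q) +
      lam2 * Real.sqrt (∑ q, (frobNorm (Z q)) ^ 2))
    (Zhat : Fin Q → Matrix (Fin M) (Fin M) ℝ)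
    (hZhat : ∀ q, Zhat q =
      (max ((frobNorm (A q) - lam1 / ρ) / frobNorm (A q)) 0 *
        max (1 - lam2 / (ρ * Real.sqrt
          (∑ q', (max (frobNorm (A q') - lam1 / ρ) 0) ^ 2))) 0) • A q) :
    ((∀ Z, G (fun _ => 0) ≤ G Z) ↔
      Real.sqrt (∑ q, (max (frobNorm (A q) - lam1 / ρ) 0) ^ 2) ≤ lam2 / ρ) ∧
    (¬ Real.sqrt (∑ q, (max (frobNorm (A q) - lam1 / ρ) 0) ^ 2) ≤ lam2 / ρ →
      ∀ Z, Z ≠ Zhat → G Zhat < G Z) := by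
  have ht₁ : 0 ≤ lam1 / ρ := div_nonneg hlam1 hρ.le
  have hstack : stackFrobVec Zhat = groupProx (lam1 / ρ) (lam2 / ρ) (stackFrobVec A) := by
    ext q : 1
    rw [groupProx_apply, norm_blockSoftThreshold ht₁]
    simp only [stackFrobVec_apply, ← frobNorm_eq_norm_frobVec, hZhat, map_smul, div_div]
  have hle (Z : Fin Q → Matrix (Fin M) (Fin M) ℝ) :
      G Zhat + ρ / 2 * ‖stackFrobVec Z - stackFrobVec Zhat‖ ^ 2 ≤ G Z := by
    simpa only [hG, ← groupObjective_stackFrobVec, hstack] using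
      groupObjective_groupProx_add_le hρ hlam1 hlam2 (stackFrobVec A) (stackFrobVec Z)
  have hlt (Z : Fin Q → Matrix (Fin M) (Fin M) ℝ) (hZ : Z ≠ Zhat) : G Zhat < G Z := by
    have hpos : 0 < ‖stackFrobVec Z - stackFrobVec Zhat‖ :=
      norm_pos_iff.2 (sub_ne_zero.2 (stackFrobVec_injective.ne hZ))
    linarith [hle Z, mul_pos (half_pos hρ) (pow_pos hpos 2)]
  have hzero : Zhat = 0 ↔
      Real.sqrt (∑ q, (max (frobNorm (A q) - lam1 / ρ) 0) ^ 2) ≤ lam2 / ρ := by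
    rw [← stackFrobVec_injective.eq_iff, hstack, map_zero,
      groupProx_eq_zero_iff ht₁ (div_nonneg hlam2 hρ.le)]
    simp only [norm_stackFrobVec_apply]
  refine ⟨⟨fun hmin => ?_, fun hs Z => ?_⟩, fun _ => hlt⟩
  · by_contra hs
    exact (hmin Zhat).not_gt (hlt _ fun h => hs (hzero.1 h.symm))
  · have hZ := hle Z
    rw [hzero.2 hs] at hZ
    exact le_of_add_le_of_nonneg_left hZ (by positivity)
end
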